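/- Define the n-th Legendre polynomial P_n ∈ ℝ[X] by Rodrigues' formula P_n = (1/(2ⁿ n!)) · Dⁿ((X² − 1)ⁿ), where D denotes polynomial differentiation. Then for all j, k ≥ 0, ∫_{−1}^{1} P_k'(x) P_j(x) dx + P_k(−1) P_j(−1) = (−1)^{k+j} if k ≤ j, and = 1 if k > j. -/
import Mathlib

open Polynomial

/-- The `n`-th Legendre polynomial, defined by Rodrigues' formula. -/
noncomputable def legendre (n : ℕ) : Polynomial ℝ :=
  (1 / (2 ^ n * n.factorial) : ℝ) • (derivative^[n] ((X ^ 2 - 1) ^ n))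

lemma sq_sub_one_eq : (X ^ 2 - 1 : ℝ[X]) = (X - C 1) * (X - C (-1)) := by
  simp only [map_one, map_neg]
  ring

lemma eval_iterate_derivative_pow_mul (c : ℝ) (g : ℝ[X]) (n m : ℕ) (h : m < n) :
    (derivative^[m] ((X - C c) ^ n * g)).eval c = 0 := by
  rw [iterate_derivative_mul, eval_finset_sum]
  refine Finset.sum_eq_zero fun i hi => ?_
  have hle : i ≤ m := Nat.lt_succ_iff.mp (Finset.mem_range.mp hi)
  rw [iterate_derivative_X_sub_pow, eval_smul, eval_mul, eval_smul, eval_pow, eval_sub,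
    eval_X, eval_C, sub_self, zero_pow, smul_zero, zero_mul, smul_zero]
  omega

lemma eval_iterate_derivative_sq_sub_one (n m : ℕ) (h : m < n) (c : ℝ)
    (hc : c = 1 ∨ c = -1) : (derivative^[m] ((X ^ 2 - 1 : ℝ[X]) ^ n)).eval c = 0 := by
  rcases hc with rfl | rfl
  · rw [sq_sub_one_eq, mul_pow]
    exact eval_iterate_derivative_pow_mul 1 _ n m h
  · rw [sq_sub_one_eq, mul_comm, mul_pow]
    exact eval_iterate_derivative_pow_mul (-1) _ n m h

lemma eval_one_iterate (n : ℕ) :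
    (derivative^[n] ((X ^ 2 - 1 : ℝ[X]) ^ n)).eval 1 = 2 ^ n * n.factorial := by
  rw [sq_sub_one_eq, mul_pow, iterate_derivative_mul, eval_finset_sum]
  rw [Finset.sum_eq_single_of_mem 0 (Finset.mem_range.mpr n.succ_pos)]
  · rw [Nat.choose_zero_right, one_smul, Nat.sub_zero, eval_mul,
      iterate_derivative_X_sub_pow_self, Function.iterate_zero_apply, eval_natCast, eval_pow,
      eval_sub, eval_X, eval_C]
    norm_num
    ring
  · intro b hb hb0
    rw [iterate_derivative_X_sub_pow, eval_smul, eval_mul, eval_smul, eval_pow,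
      Nat.sub_sub_self (Nat.lt_succ_iff.mp (Finset.mem_range.mp hb)), eval_sub, eval_X, eval_C,
      sub_self, zero_pow hb0, smul_zero, zero_mul, smul_zero]

lemma eval_neg_one_iterate (n : ℕ) :
    (derivative^[n] ((X ^ 2 - 1 : ℝ[X]) ^ n)).eval (-1) = (-2) ^ n * n.factorial := by
  rw [sq_sub_one_eq, mul_pow, iterate_derivative_mul, eval_finset_sum]
  rw [Finset.sum_eq_single_of_mem n (Finset.mem_range.mpr n.lt_succ_self)]
  · rw [Nat.choose_self, one_smul, Nat.sub_self, eval_mul,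
      iterate_derivative_X_sub_pow_self, Function.iterate_zero_apply, eval_natCast, eval_pow,
      eval_sub, eval_X, eval_C]
    norm_num
  · intro b hb hb0
    have hb' : b < n := lt_of_le_of_ne (Nat.lt_succ_iff.mp (Finset.mem_range.mp hb)) hb0
    rw [iterate_derivative_X_sub_pow n b (-1)]
    have h0 : (-1 : ℝ) - (-1) = 0 := by ring
    simp [h0, zero_pow (Nat.sub_ne_zero_of_lt hb')]

lemma two_pow_fact_ne (n : ℕ) : ((2 : ℝ) ^ n * n.factorial) ≠ 0 := by
  positivity

lemma legendre_eval_one (n : ℕ) : (legendre n).eval 1 = 1 := by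
  rw [legendre, eval_smul, eval_one_iterate, smul_eq_mul, one_div,
    inv_mul_cancel₀ (two_pow_fact_ne n)]

lemma legendre_eval_neg_one (n : ℕ) : (legendre n).eval (-1) = (-1) ^ n := by
  rw [legendre, eval_smul, eval_neg_one_iterate, smul_eq_mul]
  have : ((-2 : ℝ)) ^ n = (-1) ^ n * 2 ^ n := by
    rw [← neg_one_mul, mul_pow]
  rw [this]
  field_simp

lemma integral_derivative_eval (p : ℝ[X]) (a b : ℝ) :
    ∫ x in a..b, (derivative p).eval x = p.eval b - p.eval a := by
  apply intervalIntegral.integral_deriv_eq_sub' (fun x => p.eval x)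
  · funext x; exact p.deriv
  · intro x _; exact (p.differentiable (𝕜 := ℝ)).differentiableAt
  · exact (p.derivative.continuous_aeval).continuousOn

lemma poly_intervalIntegrable (p q : ℝ[X]) (a b : ℝ) :
    IntervalIntegrable (fun x => p.eval x * q.eval x) MeasureTheory.volume a b :=
  (p.continuous_aeval.mul q.continuous_aeval).intervalIntegrable a b

lemma integral_eval_mul_iterate_eq_zero (n : ℕ) :
    ∀ m, m ≤ n → ∀ q : ℝ[X], derivative^[m] q = 0 →
      (∫ x in (-1 : ℝ)..1, q.eval x * (derivative^[m] ((X ^ 2 - 1 : ℝ[X]) ^ n)).eval x) = 0 := by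
  intro m
  induction m with
  | zero =>
    intro _ q hq
    rw [Function.iterate_zero_apply] at hq
    simp [hq]
  | succ m ih =>
    intro hm q hq
    set R := derivative^[m] ((X ^ 2 - 1 : ℝ[X]) ^ n) with hR
    have key : (fun x => q.eval x * (derivative^[m + 1] ((X ^ 2 - 1 : ℝ[X]) ^ n)).eval x)
        = fun x => (derivative (q * R)).eval x - (derivative q).eval x * R.eval x := by
      funext x
      rw [Function.iterate_succ_apply', ← hR, derivative_mul, eval_add, eval_mul, eval_mul]
      ring
    rw [key, intervalIntegral.integral_sub]
    · rw [integral_derivative_eval]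
      have h1 : R.eval 1 = 0 := eval_iterate_derivative_sq_sub_one n m (by omega) 1 (Or.inl rfl)
      have h2 : R.eval (-1) = 0 :=
        eval_iterate_derivative_sq_sub_one n m (by omega) (-1) (Or.inr rfl)
      have h3 : (∫ x in (-1 : ℝ)..1, (derivative q).eval x * R.eval x) = 0 := by
        apply ih (by omega)
        rw [← Function.iterate_succ_apply]
        exact hq
      rw [eval_mul, eval_mul, h1, h2, h3]
      ring
    · have : (fun x => (derivative (q * R)).eval x)
          = fun x => (derivative (q * R)).eval x * (1 : ℝ[X]).eval x := by
        funext x; simp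
      rw [this]
      exact poly_intervalIntegrable _ _ _ _
    · exact poly_intervalIntegrable _ _ _ _

lemma integral_eval_mul_legendre_eq_zero (n : ℕ) (q : ℝ[X]) (hq : derivative^[n] q = 0) :
    (∫ x in (-1 : ℝ)..1, q.eval x * (legendre n).eval x) = 0 := by
  have : (fun x => q.eval x * (legendre n).eval x)
      = fun x => (1 / (2 ^ n * n.factorial) : ℝ) *
        (q.eval x * (derivative^[n] ((X ^ 2 - 1 : ℝ[X]) ^ n)).eval x) := by
    funext x
    rw [legendre, eval_smul, smul_eq_mul]
    ring
  rw [this, intervalIntegral.integral_const_mul,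
    integral_eval_mul_iterate_eq_zero n n le_rfl q hq, mul_zero]

lemma natDegree_sq_sub_one_pow_lt (n m : ℕ) (h : 2 * n < m) :
    ((X ^ 2 - 1 : ℝ[X]) ^ n).natDegree < m := by
  calc ((X ^ 2 - 1 : ℝ[X]) ^ n).natDegree ≤ n * (X ^ 2 - 1 : ℝ[X]).natDegree :=
        natDegree_pow_le
    _ ≤ n * 2 := by
        apply Nat.mul_le_mul_left
        have : (X ^ 2 - 1 : ℝ[X]) = X ^ 2 - C 1 := by rw [map_one]
        rw [this, natDegree_X_pow_sub_C]
    _ < m := by omega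

lemma iterate_derivative_legendre_eq_zero (n m : ℕ) (h : n < m) :
    derivative^[m] (legendre n) = 0 := by
  rw [legendre, iterate_derivative_smul, ← Function.iterate_add_apply,
    iterate_derivative_eq_zero (natDegree_sq_sub_one_pow_lt n (m + n) (by omega)), smul_zero]

/-- Combined coefficient in the DG time step (proof of Theorem 3.1):
`∫_{-1}^1 P_k' P_j + P_k(-1) P_j(-1)` equals `(-1)^{k+j}` if `k ≤ j` and `1` if `k > j`. -/
theorem legendre_dg_coefficients (j k : ℕ) :
    (k ≤ j →
        (∫ x in (-1 : ℝ)..1, (derivative (legendre k)).eval x * (legendre j).eval x)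
          + (legendre k).eval (-1) * (legendre j).eval (-1) = (-1) ^ (k + j))
    ∧ (j < k →
        (∫ x in (-1 : ℝ)..1, (derivative (legendre k)).eval x * (legendre j).eval x)
          + (legendre k).eval (-1) * (legendre j).eval (-1) = 1) := by
  constructor
  · intro hkj
    have hz : (∫ x in (-1 : ℝ)..1, (derivative (legendre k)).eval x * (legendre j).eval x) = 0 := by
      apply integral_eval_mul_legendre_eq_zero
      rw [← Function.iterate_succ_apply]
      exact iterate_derivative_legendre_eq_zero k (j + 1) (by omega)
    rw [hz, zero_add, legendre_eval_neg_one, legendre_eval_neg_one, ← pow_add]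
  · intro hjk
    have hz : (∫ x in (-1 : ℝ)..1, (derivative (legendre j)).eval x * (legendre k).eval x) = 0 := by
      apply integral_eval_mul_legendre_eq_zero
      rw [← Function.iterate_succ_apply]
      exact iterate_derivative_legendre_eq_zero j (k + 1) (by omega)
    have key : (fun x => (derivative (legendre k)).eval x * (legendre j).eval x)
        = fun x => (derivative (legendre k * legendre j)).eval x
            - (derivative (legendre j)).eval x * (legendre k).eval x := by
      funext x
      rw [derivative_mul, eval_add, eval_mul, eval_mul]
      ring
    rw [key, intervalIntegral.integral_sub]
    · rw [integral_derivative_eval, hz, eval_mul, eval_mul, legendre_eval_one, legendre_eval_one,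
        legendre_eval_neg_one, legendre_eval_neg_one]
      ring
    · have : (fun x => (derivative (legendre k * legendre j)).eval x)
          = fun x => (derivative (legendre k * legendre j)).eval x * (1 : ℝ[X]).eval x := by
        funext x; simp
      rw [this]
      exact poly_intervalIntegrable _ _ _ _
    · exact poly_intervalIntegrable _ _ _ _
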